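/- arXiv:2512.10424 — 2 statements merged into one kernel-verified Lean document; each statement's English description precedes it below -/
import Mathlib

section
/- Let F : ℝ³ → ℝ³ be a vector field admitting two decompositions F = F_c⁽¹⁾ + F_s⁽¹⁾ = F_c⁽²⁾ + F_s⁽²⁾, where all four fields F_c⁽¹⁾, F_s⁽¹⁾, F_c⁽²⁾, F_s⁽²⁾ : ℝ³ → ℝ³ are smooth (C^∞), curl F_c⁽¹⁾ = curl F_c⁽²⁾ = 0 everywhere, div F_s⁽¹⁾ = div F_s⁽²⁾ = 0 everywhere, and the difference G = F_c⁽¹⁾ − F_c⁽²⁾ tends to 0 as ‖r‖ → ∞. Then F_c⁽¹⁾ = F_c⁽²⁾ and F_s⁽¹⁾ = F_s⁽²⁾, i.e., the decomposition into an irrotational and a divergence-free part with decay at infinity is unique. -/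
open MeasureTheory Real

open scoped ContDiff

noncomputable section

/-- ℝ³ with the Euclidean norm. -/
abbrev E3 : Type := EuclideanSpace ℝ (Fin 3)

/-- The `i`-th partial derivative of a scalar field on ℝ³. -/
def pd (i : Fin 3) (f : E3 → ℝ) (x : E3) : ℝ :=
  fderiv ℝ f x (EuclideanSpace.single i 1)

/-- Divergence of a vector field on ℝ³: div A = ∂₁A₁ + ∂₂A₂ + ∂₃A₃. -/
def div3 (F : E3 → E3) (x : E3) : ℝ :=
  pd 0 (fun y => F y 0) x + pd 1 (fun y => F y 1) x + pd 2 (fun y => F y 2) x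

/-- Curl of a vector field on ℝ³:
curl A = (∂₂A₃ − ∂₃A₂, ∂₃A₁ − ∂₁A₃, ∂₁A₂ − ∂₂A₁). -/
def curl3 (F : E3 → E3) (x : E3) : E3 :=
  (WithLp.equiv 2 (Fin 3 → ℝ)).symm
    ![pd 1 (fun y => F y 2) x - pd 2 (fun y => F y 1) x,
      pd 2 (fun y => F y 0) x - pd 0 (fun y => F y 2) x,
      pd 0 (fun y => F y 1) x - pd 1 (fun y => F y 0) x]

/-- Gradient of a scalar field on ℝ³: ∇Φ = (∂₁Φ, ∂₂Φ, ∂₃Φ). -/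
def grad3 (f : E3 → ℝ) (x : E3) : E3 :=
  (WithLp.equiv 2 (Fin 3 → ℝ)).symm ![pd 0 f x, pd 1 f x, pd 2 f x]

/-- Laplacian of a scalar field on ℝ³: ΔΦ = ∂₁²Φ + ∂₂²Φ + ∂₃²Φ. -/
def lap3 (f : E3 → ℝ) (x : E3) : ℝ :=
  pd 0 (pd 0 f) x + pd 1 (pd 1 f) x + pd 2 (pd 2 f) x

/-- Cross product on ℝ³. -/
def cross3 (a b : E3) : E3 :=
  (WithLp.equiv 2 (Fin 3 → ℝ)).symm
    ![a 1 * b 2 - a 2 * b 1, a 2 * b 0 - a 0 * b 2, a 0 * b 1 - a 1 * b 0]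

/-! ### Auxiliary lemmas -/

lemma pd_smooth {f : E3 → ℝ} (hf : ContDiff ℝ ∞ f) (i : Fin 3) : ContDiff ℝ ∞ (pd i f) :=
  (hf.fderiv_right (by exact_mod_cast le_top)).clm_apply contDiff_const

lemma smooth_diff {f : E3 → ℝ} (hf : ContDiff ℝ ∞ f) : Differentiable ℝ f :=
  hf.differentiable (by simp)

/-- Schwarz symmetry of second partial derivatives. -/
lemma pd_schwarz {f : E3 → ℝ} (hf : ContDiff ℝ ∞ f) (i j : Fin 3) (x : E3) :
    pd i (pd j f) x = pd j (pd i f) x := by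
  have hd : ∀ y, HasFDerivAt f (fderiv ℝ f y) y := fun y =>
    (smooth_diff hf y).hasFDerivAt
  have h2 : HasFDerivAt (fderiv ℝ f) (fderiv ℝ (fderiv ℝ f) x) x :=
    (((hf.fderiv_right (m := ∞) (by exact_mod_cast le_top)).differentiable (by simp)) x).hasFDerivAt
  have key : ∀ v w : E3, fderiv ℝ (fderiv ℝ f) x v w = fderiv ℝ (fderiv ℝ f) x w v :=
    fun v w => second_derivative_symmetric hd h2 v w
  have hpd : ∀ (k l : Fin 3), pd k (pd l f) x
      = fderiv ℝ (fderiv ℝ f) x (EuclideanSpace.single k 1) (EuclideanSpace.single l 1) := by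
    intro k l
    have h3 : HasFDerivAt (pd l f)
        ((fderiv ℝ (fderiv ℝ f) x).flip (EuclideanSpace.single l 1)) x := by
      have := h2.clm_apply (hasFDerivAt_const (EuclideanSpace.single l 1) x)
      show HasFDerivAt (fun y => fderiv ℝ f y (EuclideanSpace.single l 1)) _ x
      simp at this; exact this
    rw [pd, h3.fderiv]; rfl
  rw [hpd, hpd, key]

lemma pd_sub {f g : E3 → ℝ} (hf : Differentiable ℝ f) (hg : Differentiable ℝ g) (i : Fin 3)
    (x : E3) : pd i (fun y => f y - g y) x = pd i f x - pd i g x := by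
  rw [pd, fderiv_fun_sub (hf x) (hg x)]; rfl

lemma pd_neg (f : E3 → ℝ) (i : Fin 3) (x : E3) :
    pd i (fun y => -(f y)) x = -(pd i f x) := by
  rw [pd, fderiv_fun_neg]; rfl

lemma pd_add_const_mul {f g : E3 → ℝ} (hf : Differentiable ℝ f) (hg : Differentiable ℝ g)
    (c : ℝ) (i : Fin 3) (x : E3) :
    pd i (fun y => f y + c * g y) x = pd i f x + c * pd i g x := by
  rw [pd, fderiv_fun_add (hf x) ((hg x).const_mul c), fderiv_const_mul (hg x) c]
  simp [pd]

lemma pd_add3 {f g h : E3 → ℝ} (hf : Differentiable ℝ f) (hg : Differentiable ℝ g)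
    (hh : Differentiable ℝ h) (i : Fin 3) (x : E3) :
    pd i (fun y => f y + g y + h y) x = pd i f x + pd i g x + pd i h x := by
  rw [pd, fderiv_fun_add ((hf x).fun_add (hg x)) (hh x), fderiv_fun_add (hf x) (hg x)]
  simp [pd]

lemma pd_zero (i : Fin 3) (x : E3) : pd i (fun _ => (0:ℝ)) x = 0 := by
  rw [pd, fderiv_fun_const]; simp

/-- 1D second derivative test at a local max. -/
lemma sdt (g : ℝ → ℝ) (hg : ContDiff ℝ ∞ g) (h : IsLocalMax g 0) :
    deriv (deriv g) 0 ≤ 0 := by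
  by_contra hpos
  push_neg at hpos
  have hg' : ContDiff ℝ ∞ (deriv g) := (contDiff_infty_iff_deriv.mp hg).2
  have hg'' : Continuous (deriv (deriv g)) := (contDiff_infty_iff_deriv.mp hg').2.continuous
  have hc : ContinuousAt (deriv (deriv g)) 0 := hg''.continuousAt
  have hev : ∀ᶠ t in nhds (0:ℝ), 0 < deriv (deriv g) t :=
    continuousAt_const.eventually_lt hc hpos |>.mono (fun t ht => ht)
  obtain ⟨a, ha, hball⟩ := Metric.eventually_nhds_iff.mp hev
  have hmono : StrictMonoOn (deriv g) (Set.Icc 0 (a/2)) := by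
    apply strictMonoOn_of_deriv_pos (convex_Icc _ _) (hg'.continuous.continuousOn)
    intro t ht
    rw [interior_Icc] at ht
    apply hball
    rw [Real.dist_eq]
    rw [sub_zero, abs_of_pos ht.1]; linarith [ht.2]
  have hd0 : deriv g 0 = 0 := h.deriv_eq_zero
  have hmono2 : StrictMonoOn g (Set.Icc 0 (a/2)) := by
    apply strictMonoOn_of_deriv_pos (convex_Icc _ _) (hg.continuous.continuousOn)
    intro t ht
    rw [interior_Icc] at ht
    calc 0 = deriv g 0 := hd0.symm
    _ < deriv g t := hmono ⟨le_refl 0, by linarith [ht.2]⟩ ⟨le_of_lt ht.1, le_of_lt ht.2⟩ ht.1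
  obtain ⟨b, hb, hmax⟩ := Metric.eventually_nhds_iff.mp h
  set t := min (a/2) (b/2) with ht
  have htpos : 0 < t := lt_min (by linarith) (by linarith)
  have h1 : g 0 < g t := hmono2 ⟨le_refl _, by linarith⟩ ⟨le_of_lt htpos, min_le_left _ _⟩ htpos
  have h2 : g t ≤ g 0 := hmax (by
    rw [Real.dist_eq, sub_zero, abs_of_pos htpos]
    calc t ≤ b/2 := min_le_right _ _
    _ < b := by linarith)
  linarith

/-- At an interior local maximum, each pure second partial is nonpositive. -/
lemma isLocalMax_pd_pd_nonpos (v : E3 → ℝ) (hv : ContDiff ℝ ∞ v) {x : E3}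
    (h : IsLocalMax v x) (i : Fin 3) : pd i (pd i v) x ≤ 0 := by
  set e : E3 := EuclideanSpace.single i 1 with he
  set L : ℝ → E3 := fun t => x + t • e with hL
  have hLd : ∀ t, HasDerivAt L e t := fun t => by
    simpa [hL] using ((hasDerivAt_id t).smul_const e).const_add x
  have hLc : ContDiff ℝ ∞ L := contDiff_const.add (contDiff_id.smul contDiff_const)
  have hg : ContDiff ℝ ∞ (v ∘ L) := hv.comp hLc
  have key : ∀ (w : E3 → ℝ), Differentiable ℝ w →
      deriv (w ∘ L) = fun t => pd i w (L t) := by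
    intro w hw; funext t
    have := ((hw (L t)).hasFDerivAt).comp_hasDerivAt t (hLd t)
    rw [this.deriv, pd]
  have hL0 : L 0 = x := by simp [hL]
  have hmax : IsLocalMax (v ∘ L) 0 := by
    have hten : Filter.Tendsto L (nhds 0) (nhds x) :=
      hL0 ▸ (hLc.continuous.tendsto 0)
    have := hten.eventually h
    refine this.mono (fun t ht => ?_)
    simpa [Function.comp, hL0] using ht
  have hfin := sdt (v ∘ L) hg hmax
  rw [key v (smooth_diff hv)] at hfin
  have heq : (fun t => pd i v (L t)) = (pd i v) ∘ L := rfl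
  rw [heq, key (pd i v) (smooth_diff (pd_smooth hv i))] at hfin
  have hfin2 : pd i (pd i v) (L 0) ≤ 0 := hfin
  rwa [hL0] at hfin2

lemma pd_normsq (i : Fin 3) (x : E3) : pd i (fun y : E3 => ‖y‖^2) x = 2 * x i := by
  have h0 := (hasFDerivAt_id x).norm_sq
  have h : HasFDerivAt (fun y : E3 => ‖y‖^2)
      (2 • ((innerSL ℝ) (id x)).comp (ContinuousLinearMap.id ℝ E3)) x := h0
  rw [pd, h.fderiv]
  simp [EuclideanSpace.inner_single_right, real_inner_comm]

lemma pd_pd_normsq (i : Fin 3) (x : E3) : pd i (pd i (fun y : E3 => ‖y‖^2)) x = 2 := by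
  have h1 : pd i (fun y : E3 => ‖y‖^2) = fun z : E3 => 2 * z i :=
    funext fun z => pd_normsq i z
  rw [h1]
  have h : HasFDerivAt (fun z : E3 => 2 * z i)
      ((2:ℝ) • (EuclideanSpace.proj i : E3 →L[ℝ] ℝ)) x :=
    ((EuclideanSpace.proj i : E3 →L[ℝ] ℝ).hasFDerivAt).const_mul 2
  rw [pd, h.fderiv]
  simp [EuclideanSpace.single_apply]

lemma normsq_smooth : ContDiff ℝ ∞ (fun y : E3 => ‖y‖^2) := contDiff_norm_sq ℝ

/-- Maximum-principle half of the Liouville-type theorem. -/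
lemma harmonic_decay_nonpos (u : E3 → ℝ) (hu : ContDiff ℝ ∞ u)
    (hlap : ∀ x, lap3 u x = 0)
    (hdec : ∀ ε > (0:ℝ), ∃ R, ∀ r : E3, R < ‖r‖ → |u r| < ε) (x₀ : E3) : u x₀ ≤ 0 := by
  have main : ∀ ε > (0:ℝ), u x₀ ≤ 0 + ε := by
    intro ε hε
    obtain ⟨R, hR⟩ := hdec (ε/2) (by linarith)
    set R' : ℝ := max R ‖x₀‖ + 1 with hR'
    have hmaxnn : (0:ℝ) ≤ max R ‖x₀‖ := le_trans (norm_nonneg x₀) (le_max_right _ _)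
    have hR'R : R < R' := lt_of_le_of_lt (le_max_left _ _) (by linarith)
    have hR'x : ‖x₀‖ ≤ R' := le_trans (le_max_right _ _) (by linarith)
    have hR'pos : (0:ℝ) < R' := by linarith
    set δ : ℝ := ε / (2 * R'^2) with hδ
    have hδpos : 0 < δ := by positivity
    set v : E3 → ℝ := fun y => u y + δ * ‖y‖^2 with hv
    have hvs : ContDiff ℝ ∞ v := hu.add (contDiff_const.mul normsq_smooth)
    obtain ⟨xs, hxsK, hmax⟩ := (isCompact_closedBall (0:E3) R').exists_isMaxOn
      ⟨0, by simp [le_of_lt hR'pos]⟩ (hvs.continuous.continuousOn)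
    have hxsK' : ‖xs‖ ≤ R' := by simpa [dist_zero_right] using hxsK
    by_cases hb : ‖xs‖ < R'
    · exfalso
      have hnb : Metric.closedBall (0:E3) R' ∈ nhds xs := by
        apply Metric.closedBall_mem_nhds_of_mem
        simpa [dist_zero_right] using hb
      have hloc : IsLocalMax v xs := hmax.isLocalMax hnb
      have h0 : ∀ i : Fin 3, pd i (pd i v) xs ≤ 0 :=
        fun i => isLocalMax_pd_pd_nonpos v hvs hloc i
      have hpdv : ∀ (i : Fin 3) (y : E3),
          pd i (pd i v) y = pd i (pd i u) y + δ * pd i (pd i (fun z : E3 => ‖z‖^2)) y := by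
        intro i y
        have e1 : pd i v = fun z => pd i u z + δ * pd i (fun w : E3 => ‖w‖^2) z :=
          funext fun z => pd_add_const_mul (smooth_diff hu) (smooth_diff normsq_smooth) δ i z
        rw [e1]
        exact pd_add_const_mul (smooth_diff (pd_smooth hu i))
          (smooth_diff (pd_smooth normsq_smooth i)) δ i y
      have hlv : lap3 v xs = 6 * δ := by
        have := hlap xs
        rw [lap3] at this ⊢
        rw [hpdv 0 xs, hpdv 1 xs, hpdv 2 xs, pd_pd_normsq, pd_pd_normsq, pd_pd_normsq]
        linarith
      have hle : lap3 v xs ≤ 0 := by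
        rw [lap3]; linarith [h0 0, h0 1, h0 2]
      rw [hlv] at hle; linarith
    · have hxsR : ‖xs‖ = R' := le_antisymm hxsK' (not_lt.mp hb)
      have hmem : x₀ ∈ Metric.closedBall (0:E3) R' := by
        simpa [dist_zero_right] using hR'x
      have h1 : v x₀ ≤ v xs := hmax hmem
      have h2 : u xs < ε/2 := lt_of_le_of_lt (le_abs_self _) (hR xs (by rw [hxsR]; exact hR'R))
      have hq0 : 0 ≤ δ * ‖x₀‖^2 := by positivity
      have hδR : δ * R'^2 = ε/2 := by
        rw [hδ]; field_simp
      have : v xs = u xs + δ * R'^2 := by rw [hv]; simp [hxsR]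
      have hvx : v x₀ = u x₀ + δ * ‖x₀‖^2 := rfl
      calc u x₀ ≤ v x₀ := by linarith
      _ ≤ v xs := h1
      _ = u xs + δ * R'^2 := this
      _ ≤ ε/2 + ε/2 := by rw [hδR]; linarith
      _ = 0 + ε := by ring
  have := le_of_forall_pos_le_add main
  linarith

/-- Liouville-type theorem: a harmonic function on ℝ³ decaying at infinity vanishes. -/
lemma harmonic_decay_zero (u : E3 → ℝ) (hu : ContDiff ℝ ∞ u)
    (hlap : ∀ x, lap3 u x = 0)
    (hdec : ∀ ε > (0:ℝ), ∃ R, ∀ r : E3, R < ‖r‖ → |u r| < ε) (x₀ : E3) : u x₀ = 0 := by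
  have h1 := harmonic_decay_nonpos u hu hlap hdec x₀
  have h2 : (fun y => -(u y)) x₀ ≤ 0 := by
    apply harmonic_decay_nonpos _ hu.neg
    · intro x
      have e : ∀ i : Fin 3, pd i (pd i (fun y => -(u y))) x = -(pd i (pd i u) x) := by
        intro i
        have : pd i (fun y => -(u y)) = fun z => -(pd i u z) := funext fun z => pd_neg u i z
        rw [this, pd_neg]
      rw [lap3, e 0, e 1, e 2]
      have := hlap x
      rw [lap3] at this
      linarith
    · intro ε hε
      obtain ⟨R, hR⟩ := hdec ε hε
      exact ⟨R, fun r hr => by rw [abs_neg]; exact hR r hr⟩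
  simp at h2
  linarith

lemma abs_coord_le_norm (x : E3) (j : Fin 3) : |x j| ≤ ‖x‖ := by
  rw [EuclideanSpace.norm_eq, ← Real.sqrt_sq_eq_abs]
  apply Real.sqrt_le_sqrt
  calc x j ^ 2 = ‖x j‖ ^ 2 := by rw [Real.norm_eq_abs, sq_abs]
  _ ≤ ∑ i, ‖x i‖ ^ 2 := Finset.single_le_sum (f := fun i => ‖x i‖ ^ 2) (fun i _ => by positivity) (Finset.mem_univ j)

lemma comp_smooth {F : E3 → E3} (hF : ContDiff ℝ ∞ F) (j : Fin 3) :
    ContDiff ℝ ∞ (fun y => F y j) :=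
  (EuclideanSpace.proj j : E3 →L[ℝ] ℝ).contDiff.comp hF

/-- Extract the component symmetry relations from vanishing curl. -/
lemma curl_zero_symm {Fc : E3 → E3} (hc : ∀ r : E3, curl3 Fc r = 0)
    (i j : Fin 3) (x : E3) :
    pd i (fun y => Fc y j) x = pd j (fun y => Fc y i) x := by
  have hcomp : ∀ k : Fin 3, (curl3 Fc x) k = 0 := by
    intro k; rw [hc x]; rfl
  have h0 := hcomp 0
  have h1 := hcomp 1
  have h2 := hcomp 2
  simp only [curl3, WithLp.equiv_symm_apply, PiLp.toLp_apply, Matrix.cons_val_zero, Matrix.cons_val_one,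
    Matrix.head_cons, Matrix.cons_val_two, Matrix.tail_cons] at h0 h1 h2
  fin_cases i <;> fin_cases j <;> simp_all <;> linarith

/-- **Uniqueness of the Helmholtz decomposition.** If a vector field F on ℝ³ admits two
decompositions into a smooth irrotational part and a smooth divergence-free part, and the
difference of the irrotational parts tends to 0 at infinity, then the decompositions agree. -/
theorem helmholtz_decomposition_unique
    (F Fc₁ Fs₁ Fc₂ Fs₂ : E3 → E3)
    (hFc₁ : ContDiff ℝ (⊤ : ℕ∞) Fc₁) (hFs₁ : ContDiff ℝ (⊤ : ℕ∞) Fs₁)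
    (hFc₂ : ContDiff ℝ (⊤ : ℕ∞) Fc₂) (hFs₂ : ContDiff ℝ (⊤ : ℕ∞) Fs₂)
    (hdec₁ : ∀ r : E3, F r = Fc₁ r + Fs₁ r)
    (hdec₂ : ∀ r : E3, F r = Fc₂ r + Fs₂ r)
    (hcurl₁ : ∀ r : E3, curl3 Fc₁ r = 0) (hcurl₂ : ∀ r : E3, curl3 Fc₂ r = 0)
    (hdiv₁ : ∀ r : E3, div3 Fs₁ r = 0) (hdiv₂ : ∀ r : E3, div3 Fs₂ r = 0)
    (hdecay : ∀ ε > (0 : ℝ), ∃ R : ℝ, ∀ r : E3, R < ‖r‖ → ‖Fc₁ r - Fc₂ r‖ < ε) :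
    (∀ r : E3, Fc₁ r = Fc₂ r) ∧ (∀ r : E3, Fs₁ r = Fs₂ r) := by
  have hFc₁' : ContDiff ℝ ∞ Fc₁ := hFc₁.of_le (by simp)
  have hFc₂' : ContDiff ℝ ∞ Fc₂ := hFc₂.of_le (by simp)
  have hFs₁' : ContDiff ℝ ∞ Fs₁ := hFs₁.of_le (by simp)
  have hFs₂' : ContDiff ℝ ∞ Fs₂ := hFs₂.of_le (by simp)
  set g : Fin 3 → E3 → ℝ := fun j x => Fc₁ x j - Fc₂ x j with hg
  have hgs : ∀ j, ContDiff ℝ ∞ (g j) := fun j =>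
    (comp_smooth hFc₁' j).sub (comp_smooth hFc₂' j)
  -- curl symmetry for g
  have hsymm : ∀ (i j : Fin 3) (x : E3), pd i (g j) x = pd j (g i) x := by
    intro i j x
    have e1 : g j = fun y => Fc₁ y j - Fc₂ y j := rfl
    have e2 : pd i (g j) x = pd i (fun y => Fc₁ y j) x - pd i (fun y => Fc₂ y j) x :=
      pd_sub (smooth_diff (comp_smooth hFc₁' j)) (smooth_diff (comp_smooth hFc₂' j)) i x
    have e3 : pd j (g i) x = pd j (fun y => Fc₁ y i) x - pd j (fun y => Fc₂ y i) x :=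
      pd_sub (smooth_diff (comp_smooth hFc₁' i)) (smooth_diff (comp_smooth hFc₂' i)) j x
    rw [e2, e3, curl_zero_symm hcurl₁ i j x, curl_zero_symm hcurl₂ i j x]
  -- divergence of g vanishes
  have hcomp_eq : ∀ (j : Fin 3), g j = fun y => Fs₂ y j - Fs₁ y j := by
    intro j; funext y
    have h := (hdec₁ y).symm.trans (hdec₂ y)
    have := congrArg (fun z : E3 => z j) h
    simp only at this
    have h1 : Fc₁ y j + Fs₁ y j = Fc₂ y j + Fs₂ y j := by
      simpa [PiLp.add_apply] using this
    simp [hg]; linarith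
  have hdivg : ∀ x : E3, pd 0 (g 0) x + pd 1 (g 1) x + pd 2 (g 2) x = 0 := by
    intro x
    have e : ∀ j : Fin 3, pd j (g j) x
        = pd j (fun y => Fs₂ y j) x - pd j (fun y => Fs₁ y j) x := by
      intro j
      rw [hcomp_eq j]
      exact pd_sub (smooth_diff (comp_smooth hFs₂' j)) (smooth_diff (comp_smooth hFs₁' j)) j x
    rw [e 0, e 1, e 2]
    have h1 := hdiv₁ x
    have h2 := hdiv₂ x
    rw [div3] at h1 h2
    linarith
  -- each component of g is harmonic
  have hharm : ∀ (j : Fin 3) (x : E3), lap3 (g j) x = 0 := by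
    intro j x
    have e1 : ∀ i : Fin 3, pd i (g j) = pd j (g i) := fun i => funext fun y => hsymm i j y
    have e2 : ∀ i : Fin 3, pd i (pd i (g j)) x = pd j (pd i (g i)) x := by
      intro i
      rw [e1 i]
      exact pd_schwarz (hgs i) i j x
    rw [lap3, e2 0, e2 1, e2 2]
    have e3 : pd j (pd 0 (g 0)) x + pd j (pd 1 (g 1)) x + pd j (pd 2 (g 2)) x
        = pd j (fun y => pd 0 (g 0) y + pd 1 (g 1) y + pd 2 (g 2) y) x :=
      (pd_add3 (smooth_diff (pd_smooth (hgs 0) 0)) (smooth_diff (pd_smooth (hgs 1) 1))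
        (smooth_diff (pd_smooth (hgs 2) 2)) j x).symm
    rw [e3]
    have e4 : (fun y => pd 0 (g 0) y + pd 1 (g 1) y + pd 2 (g 2) y) = fun _ => (0:ℝ) :=
      funext fun y => hdivg y
    rw [e4, pd_zero]
  -- decay for each component
  have hdecg : ∀ j, ∀ ε > (0:ℝ), ∃ R, ∀ r : E3, R < ‖r‖ → |g j r| < ε := by
    intro j ε hε
    obtain ⟨R, hR⟩ := hdecay ε hε
    refine ⟨R, fun r hr => ?_⟩
    have h1 : g j r = (Fc₁ r - Fc₂ r) j := by simp [hg, PiLp.sub_apply]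
    rw [h1]
    exact lt_of_le_of_lt (abs_coord_le_norm _ j) (hR r hr)
  have hzero : ∀ (j : Fin 3) (r : E3), g j r = 0 := fun j r =>
    harmonic_decay_zero (g j) (hgs j) (hharm j) (hdecg j) r
  have hFc : ∀ r : E3, Fc₁ r = Fc₂ r := by
    intro r
    ext j
    have := hzero j r
    simp [hg] at this
    linarith
  refine ⟨hFc, fun r => ?_⟩
  have h := (hdec₁ r).symm.trans (hdec₂ r)
  rw [hFc r] at h
  exact add_right_injective (Fc₂ r) h
end
end

section
/- Let h : ℝ³ → ℝ be a twice continuously differentiable harmonic function (Δh = 0 everywhere on ℝ³) such that h(x) → 0 as ‖x‖ → ∞. Then h is identically zero on ℝ³. -/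
open MeasureTheory Real

noncomputable section

/-!
The proof is the weak maximum principle. For `ε > 0` the function `h + ε ‖x‖²` on `ℝⁿ` has
Laplacian `2nε > 0`, so it has no local maximum; on a closed ball its maximum is therefore attained
on the boundary sphere. Letting `ε → 0`, `h` on a ball is bounded by its supremum on the sphere,
which is below any `δ > 0` once the ball is large. Hence `h ≤ 0`, and symmetrically `-h ≤ 0`.
-/

open Filter Metric Topology InnerProductSpace Laplacian Module

theorem IsLocalMax.deriv_deriv_nonpos {f : ℝ → ℝ} {a : ℝ} (hmax : IsLocalMax f a)
    (hc : ContinuousAt f a) : deriv (deriv f) a ≤ 0 := by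
  by_contra! hpos
  -- By the second-derivative test `a` is also a local minimum, so `f` is locally constant.
  have hmin : IsLocalMin f a := isLocalMin_of_deriv_deriv_pos hpos hmax.deriv_eq_zero hc
  have hconst : f =ᶠ[𝓝 a] fun _ => f a :=
    (hmax.and hmin).mono fun _ hx => le_antisymm hx.1 hx.2
  have hzero : deriv (deriv f) a = 0 := by simpa using hconst.deriv.deriv_eq
  exact hpos.ne' hzero

section SecondDerivative

variable {E F : Type*} [NormedAddCommGroup E] [NormedSpace ℝ E]
  [NormedAddCommGroup F] [NormedSpace ℝ F]

theorem deriv_comp_add_smul {g : E → F} {x v : E} {t : ℝ}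
    (hg : DifferentiableAt ℝ g (x + t • v)) :
    deriv (fun s : ℝ => g (x + s • v)) t = fderiv ℝ g (x + t • v) v := by
  have hline : HasDerivAt (fun s : ℝ => x + s • v) v t := by
    simpa using ((hasDerivAt_id t).smul_const v).const_add x
  exact (hg.hasFDerivAt.comp_hasDerivAt t hline).deriv

theorem fderiv_fderiv_apply_eq_iteratedFDeriv {f : E → F} {x : E}
    (hf : DifferentiableAt ℝ (fderiv ℝ f) x) (v w : E) :
    fderiv ℝ (fun y => fderiv ℝ f y v) x w = iteratedFDeriv ℝ 2 f x ![w, v] := by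
  rw [iteratedFDeriv_two_apply, fderiv_clm_apply hf (differentiableAt_const v)]
  simp

theorem IsLocalMax.iteratedFDeriv_two_nonpos {f : E → ℝ} (hf : ContDiff ℝ 2 f) {x : E}
    (hmax : IsLocalMax f x) (v : E) : iteratedFDeriv ℝ 2 f x ![v, v] ≤ 0 := by
  have hline : Continuous fun t : ℝ => x + t • v := by fun_prop
  have hmax_line : IsLocalMax (fun t : ℝ => f (x + t • v)) 0 :=
    IsLocalMax.comp_continuous (by simpa using hmax) hline.continuousAt
  have hf1 : Differentiable ℝ f := hf.differentiable two_ne_zero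
  have hf2 : Differentiable ℝ (fderiv ℝ f) := (hf.fderiv_right le_rfl).differentiable one_ne_zero
  have hderiv : deriv (fun t : ℝ => f (x + t • v)) = fun t => fderiv ℝ f (x + t • v) v :=
    funext fun t => deriv_comp_add_smul (hf1 _)
  have h2 := hmax_line.deriv_deriv_nonpos (hf.continuous.comp hline).continuousAt
  rwa [hderiv, deriv_comp_add_smul ((hf2 _).clm_apply (differentiableAt_const v)),
    zero_smul, add_zero, fderiv_fderiv_apply_eq_iteratedFDeriv (hf2 x)] at h2

end SecondDerivative

section Laplacian

variable {E : Type*} [NormedAddCommGroup E] [InnerProductSpace ℝ E] [FiniteDimensional ℝ E]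

theorem IsLocalMax.laplacian_nonpos {f : E → ℝ} (hf : ContDiff ℝ 2 f) {x : E}
    (hmax : IsLocalMax f x) : Δ f x ≤ 0 := by
  rw [laplacian_eq_iteratedFDeriv_stdOrthonormalBasis]
  exact Finset.sum_nonpos fun i _ => hmax.iteratedFDeriv_two_nonpos hf _

theorem laplacian_norm_sq (x : E) : Δ (fun y : E => ‖y‖ ^ 2) x = 2 * finrank ℝ E := by
  have hD2 : fderiv ℝ (fderiv ℝ fun y : E => ‖y‖ ^ 2) x = 2 • innerSL ℝ := by
    rw [fderiv_norm_sq, ← FunLike.coe_smul, ContinuousLinearMap.fderiv]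
  have hb (i) : innerSL ℝ (stdOrthonormalBasis ℝ E i) (stdOrthonormalBasis ℝ E i) = 1 := by
    rw [innerSL_apply_apply, real_inner_self_eq_norm_sq, (stdOrthonormalBasis ℝ E).norm_eq_one,
      one_pow]
  simp [laplacian_eq_iteratedFDeriv_stdOrthonormalBasis, iteratedFDeriv_two_apply, hD2, hb,
    mul_comm]

theorem norm_eq_of_isMaxOn_closedBall_of_laplacian_pos {g : E → ℝ} (hg : ContDiff ℝ 2 g)
    (hΔg : ∀ y, 0 < Δ g y) {R : ℝ} {y : E} (hy : y ∈ closedBall 0 R)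
    (hymax : IsMaxOn g (closedBall 0 R) y) : ‖y‖ = R := by
  by_contra hne
  have hyint : y ∈ ball (0 : E) R :=
    mem_ball_zero_iff.2 ((mem_closedBall_zero_iff.1 hy).lt_of_ne hne)
  have hloc : IsLocalMax g y :=
    hymax.isLocalMax (mem_of_superset (isOpen_ball.mem_nhds hyint) ball_subset_closedBall)
  exact (hΔg y).not_ge (hloc.laplacian_nonpos hg)

theorem le_of_forall_norm_eq_le_of_laplacian_eq_zero [Nontrivial E] {h : E → ℝ}
    (hh : ContDiff ℝ 2 h) (hΔ : ∀ x, Δ h x = 0) {R M : ℝ} (hM : ∀ y, ‖y‖ = R → h y ≤ M)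
    {x : E} (hx : ‖x‖ ≤ R) : h x ≤ M := by
  have hperturbed : ∀ ε > 0, h x ≤ M + ε * R ^ 2 := by
    intro ε hε
    have hq : ContDiff ℝ 2 (ε • fun y : E => ‖y‖ ^ 2) := (contDiff_norm_sq ℝ).const_smul ε
    set g : E → ℝ := h + ε • fun y => ‖y‖ ^ 2 with hg_def
    have hΔg : ∀ y, 0 < Δ g y := fun y => by
      rw [hg_def, hh.contDiffAt.laplacian_add hq.contDiffAt,
        laplacian_smul ε (contDiff_norm_sq ℝ).contDiffAt, hΔ, laplacian_norm_sq]
      have : 0 < finrank ℝ E := finrank_pos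
      simp only [smul_eq_mul]
      positivity
    obtain ⟨y, hy, hymax⟩ := (isCompact_closedBall (0 : E) R).exists_isMaxOn
      ⟨x, mem_closedBall_zero_iff.2 hx⟩ (hh.add hq).continuous.continuousOn
    have hyR : ‖y‖ = R := norm_eq_of_isMaxOn_closedBall_of_laplacian_pos (hh.add hq) hΔg hy hymax
    calc h x ≤ g x := le_add_of_nonneg_right (mul_nonneg hε.le (sq_nonneg _))
      _ ≤ g y := hymax (mem_closedBall_zero_iff.2 hx)
      _ = h y + ε * R ^ 2 := by simp [hg_def, hyR]
      _ ≤ M + ε * R ^ 2 := by gcongr; exact hM y hyR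
  refine le_of_forall_pos_le_add fun η hη => ?_
  calc h x ≤ M + η / (R ^ 2 + 1) * R ^ 2 := hperturbed _ (by positivity)
    _ ≤ M + η := by
      gcongr
      rw [div_mul_eq_mul_div, div_le_iff₀ (by positivity)]
      nlinarith

theorem nonpos_of_laplacian_eq_zero_of_forall_lt [Nontrivial E] {h : E → ℝ}
    (hh : ContDiff ℝ 2 h) (hΔ : ∀ x, Δ h x = 0)
    (hdecay : ∀ ε > 0, ∃ R, ∀ x, R < ‖x‖ → h x < ε) (x : E) : h x ≤ 0 := by
  refine le_of_forall_pos_le_add fun δ hδ => ?_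
  obtain ⟨R, hR⟩ := hdecay δ hδ
  rw [zero_add]
  refine le_of_forall_norm_eq_le_of_laplacian_eq_zero hh hΔ (R := max (R + 1) ‖x‖)
    (fun y hy => (hR y ?_).le) (le_max_right _ _)
  rw [hy]
  exact lt_max_of_lt_left (lt_add_one R)

end Laplacian

theorem lap3_eq_laplacian {f : E3 → ℝ} (hf : ContDiff ℝ 2 f) (x : E3) : lap3 f x = Δ f x := by
  have hf2 : DifferentiableAt ℝ (fderiv ℝ f) x :=
    (hf.fderiv_right le_rfl).differentiable one_ne_zero x
  have hpd : ∀ i, pd i (pd i f) x =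
      iteratedFDeriv ℝ 2 f x ![EuclideanSpace.single i 1, EuclideanSpace.single i 1] :=
    fun i => fderiv_fderiv_apply_eq_iteratedFDeriv hf2 _ _
  rw [laplacian_eq_iteratedFDeriv_orthonormalBasis f (EuclideanSpace.basisFun (Fin 3) ℝ)]
  simp [lap3, hpd, Fin.sum_univ_three]

/-- **Liouville-type theorem.** A C² harmonic function on ℝ³ that tends to 0 at infinity
is identically zero. -/
theorem harmonic_vanishing_at_infinity_eq_zero (h : E3 → ℝ)
    (hC2 : ContDiff ℝ 2 h) (hharm : ∀ x : E3, lap3 h x = 0)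
    (hdecay : ∀ ε > (0 : ℝ), ∃ R : ℝ, ∀ x : E3, R < ‖x‖ → |h x| < ε) :
    ∀ x : E3, h x = 0 := by
  have hΔ : ∀ x, Δ h x = 0 := fun x => lap3_eq_laplacian hC2 x ▸ hharm x
  have hΔneg : ∀ x, Δ (-h) x = 0 := fun x => by simp [laplacian_neg, hΔ x]
  intro x
  refine le_antisymm (nonpos_of_laplacian_eq_zero_of_forall_lt hC2 hΔ (fun ε hε => ?_) x)
    (neg_nonpos.1 (nonpos_of_laplacian_eq_zero_of_forall_lt hC2.neg hΔneg (fun ε hε => ?_) x))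
  · exact (hdecay ε hε).imp fun R hR y hy => (le_abs_self _).trans_lt (hR y hy)
  · exact (hdecay ε hε).imp fun R hR y hy => (neg_le_abs _).trans_lt (hR y hy)
end
end
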